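/- Let ξ → X be an orientable real vector bundle over a CW complex such that the integral Stiefel–Whitney classes W_{4k-1}(ξ) vanish for all k ≤ m. Then W_{4m+1}(ξ) = 0. Equivalently, if w₂, w₄, …, w_{4m-2} all admit integral lifts, then w_{4m} admits an integral lift. -/
import Mathlib


/-- Proposition `integralSW` of Albanese–Milivojević: Let `ξ → X` be an
orientable real vector bundle. Abstract model: `RZ = H^*(X;ℤ)`, `R2 = H^*(X;ℤ/2)`,
`R4 = H^*(X;ℤ/4)` as (cohomology) rings, with reductions `ρ2, ρ4`, `ρ24 : R4 → R2`,
`θ2` induced by `ℤ/2 ↪ ℤ/4`, `Sq1`, integral Bockstein `β`, Pontryagin square `P`,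
Stiefel–Whitney classes `w i`, Pontryagin classes `p i`, satisfying Wu's formula
`𝔓(w_{2m}) = ρ₄(p_m) + θ₂(Σ_{j<m} w_{2j} w_{4m-2j})` (orientable case, `w₁ = 0`),
`𝔓(ρ₂ u) = ρ₄(u²)`, `θ₂ ρ₂ = ρ₄(2·)`, `ker θ₂ = im Sq¹`, `Sq¹ = ρ₂ ∘ β`, and exactness
of `ℤ →×2 ℤ → ℤ/2` in cohomology. If `w₂, w₄, …, w_{4m-2}` all admit integral lifts
(equivalently `W_{4k-1}(ξ) = 0` for all `k ≤ m`), then `w_{4m}` admits an integral lift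
(equivalently `W_{4m+1}(ξ) = 0`). -/
theorem massey_stmt9 {RZ R2 R4 : Type} [CommRing RZ] [CommRing R2] [CommRing R4]
    (ρ2 : RZ →+* R2) (ρ4 : RZ →+* R4) (ρ24 : R4 →+* R2)
    (θ2 : R2 →+ R4) (Sq1 : R2 →+ R2) (β : R2 →+ RZ)
    (P : R2 → R4) (w : ℕ → R2) (p : ℕ → RZ) (m : ℕ) (hm : 1 ≤ m)
    (hw0 : w 0 = 1)
    (hWu : P (w (2 * m)) =
      ρ4 (p m) + θ2 (∑ j ∈ Finset.range m, w (2 * j) * w (4 * m - 2 * j)))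
    (hPsq : ∀ u : RZ, P (ρ2 u) = ρ4 (u ^ 2))
    (hθρ : ∀ x : RZ, θ2 (ρ2 x) = ρ4 (2 * x))
    (hρ24ρ4 : ∀ x : RZ, ρ24 (ρ4 x) = ρ2 x)
    (hρ24θ2 : ∀ a : R2, ρ24 (θ2 a) = 0)
    (hdiv : ∀ z : RZ, ρ2 z = 0 → ∃ x : RZ, z = 2 * x)
    (hker : ∀ a : R2, θ2 a = 0 → ∃ y : R2, Sq1 y = a)
    (hSq1 : ∀ y : R2, Sq1 y = ρ2 (β y))
    (hchar2 : ∀ a : R2, a + a = 0)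
    (hlift : ∀ k, k ≤ 2 * m - 1 → ∃ c : RZ, ρ2 c = w (2 * k)) :
    ∃ z : RZ, ρ2 z = w (4 * m) := by

  -- choose integral lifts c k of w (2k) for k ≤ 2m-1
  have hlift' : ∀ k, ∃ c : RZ, k ≤ 2 * m - 1 → ρ2 c = w (2 * k) := by
    intro k
    by_cases h : k ≤ 2 * m - 1
    · obtain ⟨c, hc⟩ := hlift k h
      exact ⟨c, fun _ => hc⟩
    · exact ⟨0, fun h' => absurd h' h⟩
  choose c hc using hlift'
  set S := ∑ j ∈ Finset.range m, w (2 * j) * w (4 * m - 2 * j) with hSdef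
  set T := ∑ j ∈ Finset.range (m - 1), c (j + 1) * c (2 * m - (j + 1)) with hTdef
  -- split off the j = 0 term of S
  have hsum := Finset.sum_range_succ' (fun j => w (2 * j) * w (4 * m - 2 * j)) (m - 1)
  have hm1 : m - 1 + 1 = m := by omega
  rw [hm1] at hsum
  have hS : S = ρ2 T + w (4 * m) := by
    rw [hSdef, hsum]
    congr 1
    · rw [hTdef, map_sum]
      apply Finset.sum_congr rfl
      intro j hj
      rw [Finset.mem_range] at hj
      have h1 : j + 1 ≤ 2 * m - 1 := by omega
      have h2 : 2 * m - (j + 1) ≤ 2 * m - 1 := by omega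
      rw [map_mul, hc _ h1, hc _ h2]
      congr 2
      omega
    · simp [hw0]
  -- the key class z
  set z := c m ^ 2 - p m with hzdef
  have hcm : ρ2 (c m) = w (2 * m) := hc m (by omega)
  have h1 : ρ4 z = θ2 S := by
    have := hWu
    rw [← hcm, hPsq] at this
    rw [hzdef, map_sub, this]
    ring
  have h2 : ρ2 z = 0 := by
    have := congrArg ρ24 h1
    rw [hρ24ρ4, hρ24θ2] at this
    exact this
  obtain ⟨x, hx⟩ := hdiv z h2
  have h3 : θ2 (S - ρ2 x) = 0 := by
    rw [map_sub, hθρ, ← hx, h1, sub_self]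
  obtain ⟨y, hy⟩ := hker _ h3
  rw [hSq1] at hy
  refine ⟨x + β y - T, ?_⟩
  rw [map_sub, map_add, hy]
  rw [hS]
  ring
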